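/- Let A, B be n×n real symmetric positive definite matrices. Then λ_k(A, B) ≤ λ_k(𝓛(A), B) for all k = 1, …, n; that is, lumping the first matrix of the pencil leads to an overestimate of every generalized eigenvalue. -/

import Mathlib

open Matrix

/-- The Euclidean norm of a vector. -/
noncomputable def enorm {m : Type*} [Fintype m] (v : m → ℝ) : ℝ :=
  Real.sqrt (∑ i, (v i) ^ 2)

/-- The square root of a positive semidefinite matrix, as `Matrix.PosSemidef.sqrt` was defined
in the older Mathlib: `U * diagonal (√ ∘ eigenvalues) * U⋆`. -/
noncomputable def oldPSDSqrt {m : Type*} [Fintype m] [DecidableEq m] {A : Matrix m m ℝ}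
    (hA : A.PosSemidef) : Matrix m m ℝ :=
  hA.1.eigenvectorUnitary.1 * diagonal ((↑) ∘ Real.sqrt ∘ hA.1.eigenvalues) *
    (star hA.1.eigenvectorUnitary : Matrix m m ℝ)

theorem oldPSDSqrt_isHermitian {m : Type*} [Fintype m] [DecidableEq m] {A : Matrix m m ℝ}
    (hA : A.PosSemidef) : (oldPSDSqrt hA).IsHermitian := by
  unfold oldPSDSqrt
  simp only [IsHermitian, conjTranspose_mul, diagonal_conjTranspose, star_trivial, Matrix.mul_assoc]
  rw [← star_eq_conjTranspose, ← star_eq_conjTranspose, star_star]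

/-- The `k`-th smallest generalized eigenvalue (counted with multiplicity) of the
symmetric pencil `(A, B)` with `B` positive definite, i.e. the `k`-th smallest root of
`det (A - λ B) = 0`.  It is defined as the `k`-th smallest eigenvalue of the Hermitian
matrix `√(B⁻¹) * A * √(B⁻¹)`, which is similar to `B⁻¹ * A`.  Junk value `0` is returned
if `A` is not symmetric or `B` is not positive definite. -/
noncomputable def genEig {m : Type*} [Fintype m] [DecidableEq m]
    (A B : Matrix m m ℝ) (k : Fin (Fintype.card m)) : ℝ :=
  letI := Classical.propDecidable
  if h : A.IsHermitian ∧ B.PosDef then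
    let S : Matrix m m ℝ := oldPSDSqrt (h.2.inv).posSemidef
    have hS : S.IsHermitian := oldPSDSqrt_isHermitian (h.2.inv).posSemidef
    have hC : (S * A * S).IsHermitian := by
      show (S * A * S)ᴴ = S * A * S
      rw [conjTranspose_mul, conjTranspose_mul, hS.eq, h.1.eq, Matrix.mul_assoc]
    let f : Fin (Fintype.card m) → ℝ := hC.eigenvalues₀
    f (Tuple.sort f k)
  else 0

/-- The `k`-th smallest generalized eigenvalue of a pencil of `n × n` matrices,
indexed by `Fin n`.  `genEigFin A B 0` is the smallest one, `λ_1(A,B)`, and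
`genEigFin A B (Fin.last _)` is the largest one, `λ_n(A,B)`. -/
noncomputable def genEigFin {n : ℕ} (A B : Matrix (Fin n) (Fin n) ℝ) (k : Fin n) : ℝ :=
  genEig A B (Fin.cast (Fintype.card_fin n).symm k)

/-- The (row-sum) lumping operator: `lump B` is the diagonal matrix whose `i`-th
diagonal entry is the sum of the absolute values of the entries of the `i`-th row of `B`. -/
noncomputable def lump {m : Type*} [Fintype m] [DecidableEq m]
    (B : Matrix m m ℝ) : Matrix m m ℝ :=
  Matrix.diagonal fun i => ∑ j, |B i j|

/-- The banded part `D_i` of a matrix: it keeps all sub- and super-diagonals of index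
smaller than `i` (i.e. the entries with `|j - k| < i`) and sets the rest to zero. -/
def diagBand {n : ℕ} (B : Matrix (Fin n) (Fin n) ℝ) (i : ℕ) : Matrix (Fin n) (Fin n) ℝ :=
  Matrix.of fun j k => if |((j : ℕ) : ℤ) - ((k : ℕ) : ℤ)| < (i : ℤ) then B j k else 0

/-- The lumped preconditioner `P_i = D_i + 𝓛(R_i)` where `B = D_i + R_i`, `D_i` being the
banded part of `B` of bandwidth `i` and `R_i` the remainder. -/
noncomputable def precond {n : ℕ} (B : Matrix (Fin n) (Fin n) ℝ) (i : ℕ) :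
    Matrix (Fin n) (Fin n) ℝ :=
  diagBand B i + lump (B - diagBand B i)

/-!
Gershgorin's circle theorem shows that `𝓛(A) - A` is positive semidefinite: its rows are weakly
diagonally dominant with nonnegative diagonal, because `∑ⱼ |aᵢⱼ| - aᵢᵢ ≥ ∑_{j ≠ i} |aᵢⱼ|`.
Congruence by `S = √(B⁻¹)` preserves this, so `S A S ≤ S 𝓛(A) S` in the Loewner order, and the
generalized eigenvalues of the two pencils are the eigenvalues of these two matrices.
Eigenvalues of self-adjoint operators are monotone in the Loewner order: if `T ≤ S`, then by a
dimension count some nonzero `x` lies both in the span of the `i + 1` largest eigenvectors of `T`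
and in the span of the `n - i` smallest eigenvectors of `S`, and then, with `λᵢ` the `i`-th
largest eigenvalue, `λᵢ(T) ‖x‖² ≤ ⟪T x, x⟫ ≤ ⟪S x, x⟫ ≤ λᵢ(S) ‖x‖²`.
-/

open Module Submodule
open scoped InnerProductSpace ComplexOrder

theorem Submodule.exists_ne_zero_mem_inf_of_finrank_lt {K V : Type*} [DivisionRing K]
    [AddCommGroup V] [Module K V] [FiniteDimensional K V] {W₁ W₂ : Submodule K V}
    (h : finrank K V < finrank K W₁ + finrank K W₂) : ∃ x ∈ W₁ ⊓ W₂, x ≠ 0 := by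
  rw [← Submodule.ne_bot_iff]
  intro hbot
  have hsup := finrank_sup_add_finrank_inf_eq W₁ W₂
  have := (W₁ ⊔ W₂).finrank_le
  rw [hbot, finrank_bot] at hsup
  omega

section

variable {𝕜 E ι : Type*} [RCLike 𝕜] [NormedAddCommGroup E] [InnerProductSpace 𝕜 E] [Fintype ι]

theorem OrthonormalBasis.repr_eq_zero_of_mem_span (b : OrthonormalBasis ι 𝕜 E) {s : Set ι}
    {x : E} (hx : x ∈ span 𝕜 (b '' s)) {j : ι} (hj : j ∉ s) : b.repr x j = 0 := by
  have hle : span 𝕜 (b '' s) ≤ LinearMap.ker (innerₛₗ 𝕜 (b j)) := by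
    refine span_le.2 ?_
    rintro _ ⟨i, hi, rfl⟩
    exact b.orthonormal.2 (ne_of_mem_of_not_mem hi hj).symm
  rw [b.repr_apply_apply]
  exact hle hx

theorem OrthonormalBasis.finrank_span_image (b : OrthonormalBasis ι 𝕜 E) (s : Finset ι) :
    finrank 𝕜 (span 𝕜 (b '' s)) = s.card := by
  have hli : LinearIndependent 𝕜 fun i : (s : Set ι) => b i :=
    b.orthonormal.linearIndependent.comp _ Subtype.val_injective
  rw [Set.image_eq_range, finrank_span_eq_card hli]
  simp

end

namespace LinearMap.IsSymmetric

variable {𝕜 E : Type*} [RCLike 𝕜] [NormedAddCommGroup E] [InnerProductSpace 𝕜 E]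
  [FiniteDimensional 𝕜 E] {T S : E →ₗ[𝕜] E} {n : ℕ}

theorem re_inner_apply_self_eq_sum (hT : T.IsSymmetric) (hn : finrank 𝕜 E = n) (x : E) :
    RCLike.re ⟪T x, x⟫_𝕜 =
      ∑ i, hT.eigenvalues hn i * ‖(hT.eigenvectorBasis hn).repr x i‖ ^ 2 := by
  rw [← (hT.eigenvectorBasis hn).repr.inner_map_map, PiLp.inner_apply, map_sum]
  refine Finset.sum_congr rfl fun i _ => ?_
  rw [eigenvectorBasis_apply_self_apply, RCLike.inner_apply', map_mul (starRingEnd 𝕜),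
    RCLike.conj_ofReal, mul_assoc, RCLike.conj_mul, ← RCLike.ofReal_pow, RCLike.re_ofReal_mul,
    RCLike.ofReal_re]

theorem eigenvalues_mul_norm_sq_le_re_inner (hT : T.IsSymmetric) (hn : finrank 𝕜 E = n)
    {i : Fin n} {x : E}
    (hx : x ∈ span 𝕜 (hT.eigenvectorBasis hn '' ↑(Finset.Iic i))) :
    hT.eigenvalues hn i * ‖x‖ ^ 2 ≤ RCLike.re ⟪T x, x⟫_𝕜 := by
  rw [re_inner_apply_self_eq_sum, ← (hT.eigenvectorBasis hn).repr.norm_map,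
    EuclideanSpace.norm_sq_eq, Finset.mul_sum]
  refine Finset.sum_le_sum fun j _ => ?_
  by_cases hj : j ≤ i
  · exact mul_le_mul_of_nonneg_right (hT.eigenvalues_antitone hn hj) (by positivity)
  · rw [OrthonormalBasis.repr_eq_zero_of_mem_span _ hx (by simpa using hj)]
    simp

theorem re_inner_le_eigenvalues_mul_norm_sq (hT : T.IsSymmetric) (hn : finrank 𝕜 E = n)
    {i : Fin n} {x : E}
    (hx : x ∈ span 𝕜 (hT.eigenvectorBasis hn '' ↑(Finset.Ici i))) :
    RCLike.re ⟪T x, x⟫_𝕜 ≤ hT.eigenvalues hn i * ‖x‖ ^ 2 := by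
  rw [re_inner_apply_self_eq_sum, ← (hT.eigenvectorBasis hn).repr.norm_map,
    EuclideanSpace.norm_sq_eq, Finset.mul_sum]
  refine Finset.sum_le_sum fun j _ => ?_
  by_cases hj : i ≤ j
  · exact mul_le_mul_of_nonneg_right (hT.eigenvalues_antitone hn hj) (by positivity)
  · rw [OrthonormalBasis.repr_eq_zero_of_mem_span _ hx (by simpa using hj)]
    simp

theorem eigenvalues_le_eigenvalues_of_le (hT : T.IsSymmetric) (hS : S.IsSymmetric)
    (hn : finrank 𝕜 E = n) (hTS : T ≤ S) (i : Fin n) :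
    hT.eigenvalues hn i ≤ hS.eigenvalues hn i := by
  obtain ⟨x, ⟨hxT, hxS⟩, hx⟩ := exists_ne_zero_mem_inf_of_finrank_lt
    (W₁ := span 𝕜 (hT.eigenvectorBasis hn '' ↑(Finset.Iic i)))
    (W₂ := span 𝕜 (hS.eigenvectorBasis hn '' ↑(Finset.Ici i))) (by
      rw [OrthonormalBasis.finrank_span_image, OrthonormalBasis.finrank_span_image,
        Fin.card_Iic, Fin.card_Ici, hn]
      omega)
  have hTS_x : RCLike.re ⟪T x, x⟫_𝕜 ≤ RCLike.re ⟪S x, x⟫_𝕜 := by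
    simpa [inner_sub_left] using hTS.2 x
  refine le_of_mul_le_mul_right ?_ (by positivity : 0 < ‖x‖ ^ 2)
  exact (hT.eigenvalues_mul_norm_sq_le_re_inner hn hxT).trans
    (hTS_x.trans (hS.re_inner_le_eigenvalues_mul_norm_sq hn hxS))

end LinearMap.IsSymmetric

theorem Tuple.comp_sort_eq_comp_revPerm_of_antitone {n : ℕ} {α : Type*} [LinearOrder α]
    {f : Fin n → α} (hf : Antitone f) : f ∘ Tuple.sort f = f ∘ Fin.revPerm :=
  (Tuple.comp_sort_eq_comp_iff_monotone.mpr (hf.comp Fin.rev_anti)).symm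

namespace Matrix

variable {m : Type*} [Fintype m] [DecidableEq m]

theorem IsHermitian.eigenvalues₀_le_eigenvalues₀ {𝕜 : Type*} [RCLike 𝕜] {M N : Matrix m m 𝕜}
    (hM : M.IsHermitian) (hN : N.IsHermitian) (hMN : (N - M).PosSemidef)
    (i : Fin (Fintype.card m)) : hM.eigenvalues₀ i ≤ hN.eigenvalues₀ i :=
  LinearMap.IsSymmetric.eigenvalues_le_eigenvalues_of_le _ _ _
    (by rwa [LinearMap.le_def, ← map_sub, isPositive_toEuclideanLin_iff]) i

theorem IsHermitian.posSemidef_of_sum_abs_le_diag {M : Matrix m m ℝ} (hM : M.IsHermitian)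
    (hdiag : ∀ k, ∑ j ∈ Finset.univ.erase k, |M k j| ≤ M k k) : M.PosSemidef := by
  rw [hM.posSemidef_iff_eigenvalues_nonneg]
  intro i
  have hi : Module.End.HasEigenvalue (toLin' M) (hM.eigenvalues i) := by
    rw [Module.End.hasEigenvalue_iff_mem_spectrum, spectrum_toLin']
    exact hM.eigenvalues_mem_spectrum_real i
  obtain ⟨k, hk⟩ := eigenvalue_mem_ball hi
  rw [Metric.mem_closedBall, Real.dist_eq] at hk
  simp only [Real.norm_eq_abs] at hk
  simp only [Pi.zero_apply]
  linarith [hdiag k, neg_abs_le (hM.eigenvalues i - M k k)]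

end Matrix

section Lumping

variable {m : Type*} [Fintype m] [DecidableEq m]

theorem lump_isHermitian (A : Matrix m m ℝ) : (lump A).IsHermitian :=
  isHermitian_diagonal _

theorem posSemidef_lump_sub {A : Matrix m m ℝ} (hA : A.IsHermitian) :
    (lump A - A).PosSemidef := by
  refine ((lump_isHermitian A).sub hA).posSemidef_of_sum_abs_le_diag fun k => ?_
  have hoff : ∀ j ∈ Finset.univ.erase k, |(lump A - A) k j| = |A k j| := fun j hj => by
    simp [lump, diagonal_apply_ne _ (Finset.ne_of_mem_erase hj).symm]
  rw [Finset.sum_congr rfl hoff, Matrix.sub_apply, lump, diagonal_apply_eq,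
    ← Finset.add_sum_erase _ _ (Finset.mem_univ k)]
  linarith [le_abs_self (A k k)]

end Lumping

theorem genEig_le_genEig_of_posSemidef_sub {m : Type*} [Fintype m] [DecidableEq m]
    {A A' B : Matrix m m ℝ} (hA : A.IsHermitian) (hA' : A'.IsHermitian) (hB : B.PosDef)
    (hAA' : (A' - A).PosSemidef) (k : Fin (Fintype.card m)) :
    genEig A B k ≤ genEig A' B k := by
  unfold genEig
  rw [dif_pos ⟨hA, hB⟩, dif_pos ⟨hA', hB⟩]
  dsimp only
  generalize_proofs hS hC hC'
  -- `genEig` is elaborated with classical decidability; swap the ambient instance for it.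
  clear ‹DecidableEq m›
  classical
  have hsort {M : Matrix m m ℝ} (hM : M.IsHermitian) :
      hM.eigenvalues₀ (Tuple.sort hM.eigenvalues₀ k) = hM.eigenvalues₀ k.rev :=
    congrFun (Tuple.comp_sort_eq_comp_revPerm_of_antitone hM.eigenvalues₀_antitone) k
  rw [hsort, hsort]
  refine hC.eigenvalues₀_le_eigenvalues₀ hC' ?_ _
  have h := hAA'.mul_mul_conjTranspose_same (oldPSDSqrt hS)
  rwa [(oldPSDSqrt_isHermitian hS).eq, Matrix.mul_sub, Matrix.sub_mul] at h

/-- `λ_k(A, B) ≤ λ_k(𝓛(A), B)` for all `k`. -/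
theorem stmt_9 {n : ℕ} (A B : Matrix (Fin n) (Fin n) ℝ)
    (hA : A.PosDef) (hB : B.PosDef) :
    ∀ k : Fin n, genEigFin A B k ≤ genEigFin (lump A) B k := fun k =>
  genEig_le_genEig_of_posSemidef_sub hA.1 (lump_isHermitian A) hB (posSemidef_lump_sub hA.1)
    (Fin.cast (Fintype.card_fin n).symm k)
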